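/- Let n ≥ 0 and let Q = (Q₀,Q₁,ρ) be a bound quiver with homogeneous relations, equipped with subsets 𝒫, ℐ ⊆ Q₀ and a bijection τ: Q₀∖𝒫 → Q₀∖ℐ satisfying conditions (1) and (2) of the definition of an n-translation quiver, and let Λ = k(Q). Then conditions (3) and (4) of that definition hold if and only if: for each i ∈ Q₀∖𝒫 and each j ∈ Q₀ such that there is a bound path from j to i of length t or a bound path from τi to j of length n+1−t, the multiplication of Λ defines a non-degenerate bilinear form e_iΛ_t e_j × e_jΛ_{n+1−t} e_{τi} → e_iΛ_{n+1} e_{τi}. -/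

import Mathlib

namespace NTranslation

/-- Paths in a quiver with vertex set `V` and arrow spaces `Arr i j`. -/
inductive PathIn {V : Type} (Arr : V → V → Type) : V → V → Type
  | nil (i : V) : PathIn Arr i i
  | cons {i j l : V} (p : PathIn Arr i j) (a : Arr j l) : PathIn Arr i l

namespace PathIn

variable {V : Type} {Arr : V → V → Type}

/-- The length of a path. -/
def length : ∀ {i j : V}, PathIn Arr i j → ℕ
  | _, _, .nil _ => 0
  | _, _, .cons p _ => p.length + 1

/-- Composition of paths (`p.comp q` is `p` followed by `q`). -/
def comp : ∀ {i j l : V}, PathIn Arr i j → PathIn Arr j l → PathIn Arr i l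
  | _, _, _, p, .nil _ => p
  | _, _, _, p, .cons q a => .cons (p.comp q) a

/-- The set of vertices visited by a path (including both end points). -/
def mentions : ∀ {i j : V}, PathIn Arr i j → V → Prop
  | i, _, .nil _, v => v = i
  | _, _, .cons (l := l) p _, v => p.mentions v ∨ v = l

/-- Relabel the arrows of a path along a map of arrow families. -/
def mapArr {Arr' : V → V → Type} (φ : ∀ a b : V, Arr a b → Arr' a b) :
    ∀ {i j : V}, PathIn Arr i j → PathIn Arr' i j
  | _, _, .nil i => .nil i
  | _, _, .cons (j := a) (l := b) p x => .cons (p.mapArr φ) (φ a b x)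

end PathIn

section PathPresentation

variable (k : Type) [Field k]
variable (V : Type) (Arr : V → V → Type)
variable (A : Type) [Ring A] [Algebra k A]
variable (e : V → A) (arr : ∀ i j, Arr i j → A)

/-- Evaluation of a path in the algebra `A` (arrows composed left of earlier
arrows; a trivial path evaluates to the corresponding idempotent). -/
noncomputable def evalPath : ∀ {i j : V}, PathIn Arr i j → A
  | _, _, .nil i => e i
  | _, _, .cons (j := j) (l := l) p a => arr j l a * evalPath p

/-- A formal `k`-linear combination of paths from `i` to `j`. -/
abbrev Comb (i j : V) := PathIn Arr i j →₀ k

/-- Evaluation of a formal linear combination of paths in `A`. -/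
noncomputable def evalComb {i j : V} (u : Comb k V Arr i j) : A :=
  u.sum fun p c => c • evalPath V Arr A e arr p

/-- Evaluation of a formal linear combination of arrows in `A`. -/
noncomputable def evalArrComb {i j : V} (u : Arr i j →₀ k) : A :=
  u.sum fun a c => c • arr i j a

/-- `u` is a homogeneous combination of paths of length `t` from `i` to `j`
which is a *bound element*, i.e. has nonzero image in the algebra. -/
noncomputable def IsBoundElement {i j : V} (u : Comb k V Arr i j) (t : ℕ) : Prop :=
  (∀ p ∈ u.support, PathIn.length p = t) ∧ evalComb k V Arr A e arr u ≠ 0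

/-- The span of the images of the paths of length `t` in `A`. -/
noncomputable def pathDegSpan (t : ℕ) : Submodule k A :=
  Submodule.span k {x : A |
    ∃ (i j : V) (p : PathIn Arr i j), p.length = t ∧ evalPath V Arr A e arr p = x}

/-- The span of the images of the paths of length `t` from `j` to `i`
(the corner space `e_i Λ_t e_j`). -/
noncomputable def pathCornerSpan (i j : V) (t : ℕ) : Submodule k A :=
  Submodule.span k {x : A |
    ∃ p : PathIn Arr j i, p.length = t ∧ evalPath V Arr A e arr p = x}

/-- The `(i,j)`-component of the two-sided ideal of the path algebra generated
by the relation set `ρ`, described as the span of the relations composed with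
paths on both sides. -/
noncomputable def extendedRelations (ρ : ∀ i j : V, Set (Comb k V Arr i j))
    (i j : V) : Submodule k (Comb k V Arr i j) :=
  Submodule.span k {z : Comb k V Arr i j |
    ∃ (a b : V) (r : Comb k V Arr a b) (_ : r ∈ ρ a b)
      (v : PathIn Arr i a) (w : PathIn Arr b j),
      z = Finsupp.mapDomain (fun p => (v.comp p).comp w) r}

/-- `(A, e, arr)` realizes the bound quiver algebra `k(Q) = kQ/(ρ)` of the
bound quiver `Q = (V, Arr, ρ)` with homogeneous relations. -/
structure IsBoundQuiverAlgebra (ρ : ∀ i j : V, Set (Comb k V Arr i j)) : Prop where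
  idem : ∀ i, e i * e i = e i
  orth : ∀ i j, i ≠ j → e i * e j = 0
  e_ne : ∀ i, e i ≠ 0
  arr_comp : ∀ (i j : V) (a : Arr i j), e j * arr i j a * e i = arr i j a
  locFin : ∀ i j : V, Finite (Arr i j)
  spanning : pathDegSpan k V Arr A e arr 0 = Submodule.span k (Set.range e)
  graded : DirectSum.IsInternal (pathDegSpan k V Arr A e arr)
  homog : ∀ (i j : V), ∀ r ∈ ρ i j,
    ∃ t : ℕ, 2 ≤ t ∧ ∀ p ∈ r.support, PathIn.length p = t
  kernel : ∀ (i j : V) (u : Comb k V Arr i j),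
    evalComb k V Arr A e arr u = 0 ↔ u ∈ extendedRelations k V Arr ρ i j

/-- The bound quiver `(V, Arr, ρ)`, realized by the algebra `(A, e, arr)`,
together with `(𝒫, ℐ, τ)`, is an `n`-translation quiver. -/
structure IsNTranslationQuiver (n : ℕ) (P I : Set V) (τ : V → V) : Prop where
  bij : Set.BijOn τ Pᶜ Iᶜ
  /- (1a): for each non-projective `i` there is a bound path of length `n+1`
  from `τ i` to `i`. -/
  exists_max : ∀ i ∉ P, ∃ p : PathIn Arr (τ i) i,
    p.length = n + 1 ∧ evalPath V Arr A e arr p ≠ 0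
  /- (1b): every maximal bound path has length `n+1` and runs from `τ i` to `i`
  for some non-projective `i`. -/
  max_bound : ∀ (a b : V) (p : PathIn Arr a b), evalPath V Arr A e arr p ≠ 0 →
    (∀ (c : V) (α : Arr b c), arr b c α * evalPath V Arr A e arr p = 0) →
    (∀ (c : V) (α : Arr c a), evalPath V Arr A e arr p * arr c a α = 0) →
    ∃ i, i ∉ P ∧ a = τ i ∧ b = i ∧ p.length = n + 1
  /- (2): two bound paths of length `n+1` from `τ i` to `i` are linearly
  dependent. -/
  lin_dep : ∀ i ∉ P, ∀ (p q : PathIn Arr (τ i) i),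
    p.length = n + 1 → q.length = n + 1 →
    ∃ c d : k, ¬ (c = 0 ∧ d = 0) ∧
      c • evalPath V Arr A e arr p + d • evalPath V Arr A e arr q = 0
  /- (3) -/
  cond3 : ∀ i ∉ P, ∀ (j : V) (t : ℕ), t ≤ n + 1 →
    ∀ u : Comb k V Arr j i, IsBoundElement k V Arr A e arr u t →
      ∃ q : PathIn Arr (τ i) j, q.length + t = n + 1 ∧
        evalComb k V Arr A e arr u * evalPath V Arr A e arr q ≠ 0
  /- (4) -/
  cond4 : ∀ i ∉ I, ∀ (j : V) (t : ℕ), t ≤ n + 1 →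
    ∀ u : Comb k V Arr i j, IsBoundElement k V Arr A e arr u t →
      ∃ i', i' ∉ P ∧ τ i' = i ∧ ∃ p : PathIn Arr j i', p.length + t = n + 1 ∧
        evalPath V Arr A e arr p * evalComb k V Arr A e arr u ≠ 0

end PathPresentation
end NTranslation

/-!
An element of the corner space `e_i Λ_t e_j` is exactly the image of a homogeneous combination
of paths of length `t` from `j` to `i`, and a linear image of such a combination (for instance a
product with it) is nonzero only if it is nonzero on one of its paths. Hence pairing nontrivially
with some element of a corner space is the same as pairing nontrivially with a single path of
the right length, which is what conditions (3) and (4) ask for; (4) at `τ i` is matched with the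
right half of the pairing at `i` because `τ` is a bijection `Q₀ ∖ 𝒫 → Q₀ ∖ ℐ`.
-/

namespace NTranslation

variable {k : Type} [Field k] {V : Type} {Arr : V → V → Type}
  {A : Type} [Ring A] [Algebra k A] {e : V → A} {arr : ∀ i j : V, Arr i j → A}

def MulSeparatingLeft (X Y : Submodule k A) : Prop :=
  ∀ x ∈ X, x ≠ 0 → ∃ y ∈ Y, x * y ≠ 0

def MulSeparatingRight (X Y : Submodule k A) : Prop :=
  ∀ y ∈ Y, y ≠ 0 → ∃ x ∈ X, x * y ≠ 0

theorem evalComb_eq_linearCombination {i j : V} (u : Comb k V Arr i j) :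
    evalComb k V Arr A e arr u = Finsupp.linearCombination k (evalPath V Arr A e arr) u :=
  (Finsupp.linearCombination_apply k u).symm

theorem mem_pathCornerSpan_iff {i j : V} {t : ℕ} {x : A} :
    x ∈ pathCornerSpan k V Arr A e arr i j t ↔
      ∃ u : Comb k V Arr j i, (∀ p ∈ u.support, p.length = t) ∧
        evalComb k V Arr A e arr u = x := by
  have hspan : pathCornerSpan k V Arr A e arr i j t =
      Submodule.span k (evalPath V Arr A e arr '' {p : PathIn Arr j i | p.length = t}) := by
    rfl
  simp only [hspan, Finsupp.mem_span_image_iff_linearCombination, Finsupp.mem_supported,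
    evalComb_eq_linearCombination, Set.subset_def, Finset.mem_coe, Set.mem_ofPred_eq]

theorem evalPath_mem_pathCornerSpan {i j : V} (p : PathIn Arr j i) :
    evalPath V Arr A e arr p ∈ pathCornerSpan k V Arr A e arr i j p.length :=
  Submodule.subset_span ⟨p, rfl, rfl⟩

theorem exists_mem_support_map_evalPath_ne_zero {M : Type} [AddCommGroup M] [Module k M]
    (L : A →ₗ[k] M) {i j : V} (u : Comb k V Arr i j)
    (h : L (evalComb k V Arr A e arr u) ≠ 0) :
    ∃ p ∈ u.support, L (evalPath V Arr A e arr p) ≠ 0 := by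
  rw [evalComb_eq_linearCombination, Finsupp.apply_linearCombination,
    Finsupp.linearCombination_apply, Finsupp.sum] at h
  obtain ⟨p, hp, hne⟩ := Finset.exists_ne_zero_of_sum_ne_zero h
  exact ⟨p, hp, right_ne_zero_of_smul hne⟩

theorem IsBoundElement.exists_path {i j : V} {t : ℕ} {u : Comb k V Arr i j}
    (hu : IsBoundElement k V Arr A e arr u t) :
    ∃ p : PathIn Arr i j, p.length = t ∧ evalPath V Arr A e arr p ≠ 0 := by
  obtain ⟨p, hp, hne⟩ :=
    exists_mem_support_map_evalPath_ne_zero (LinearMap.id (R := k) (M := A)) u hu.2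
  exact ⟨p, hu.1 p hp, hne⟩

theorem mulSeparatingLeft_pathCornerSpan_iff {a b c : V} {s r : ℕ} :
    MulSeparatingLeft (pathCornerSpan k V Arr A e arr a b s)
        (pathCornerSpan k V Arr A e arr b c r) ↔
      ∀ u : Comb k V Arr b a, IsBoundElement k V Arr A e arr u s →
        ∃ q : PathIn Arr c b, q.length = r ∧
          evalComb k V Arr A e arr u * evalPath V Arr A e arr q ≠ 0 := by
  constructor
  · intro H u hu
    obtain ⟨y, hy, hne⟩ := H _ (mem_pathCornerSpan_iff.2 ⟨u, hu.1, rfl⟩) hu.2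
    obtain ⟨v, hv, rfl⟩ := mem_pathCornerSpan_iff.1 hy
    obtain ⟨q, hq, hne⟩ :=
      exists_mem_support_map_evalPath_ne_zero
        (LinearMap.mulLeft k (evalComb k V Arr A e arr u)) v hne
    exact ⟨q, hv q hq, hne⟩
  · rintro H x hx hx0
    obtain ⟨u, hu, rfl⟩ := mem_pathCornerSpan_iff.1 hx
    obtain ⟨q, rfl, hne⟩ := H u ⟨hu, hx0⟩
    exact ⟨_, evalPath_mem_pathCornerSpan q, hne⟩

theorem mulSeparatingRight_pathCornerSpan_iff {a b c : V} {s r : ℕ} :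
    MulSeparatingRight (pathCornerSpan k V Arr A e arr a b s)
        (pathCornerSpan k V Arr A e arr b c r) ↔
      ∀ u : Comb k V Arr c b, IsBoundElement k V Arr A e arr u r →
        ∃ p : PathIn Arr b a, p.length = s ∧
          evalPath V Arr A e arr p * evalComb k V Arr A e arr u ≠ 0 := by
  constructor
  · intro H u hu
    obtain ⟨x, hx, hne⟩ := H _ (mem_pathCornerSpan_iff.2 ⟨u, hu.1, rfl⟩) hu.2
    obtain ⟨w, hw, rfl⟩ := mem_pathCornerSpan_iff.1 hx
    obtain ⟨p, hp, hne⟩ :=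
      exists_mem_support_map_evalPath_ne_zero
        (LinearMap.mulRight k (evalComb k V Arr A e arr u)) w hne
    exact ⟨p, hw p hp, hne⟩
  · rintro H y hy hy0
    obtain ⟨u, hu, rfl⟩ := mem_pathCornerSpan_iff.1 hy
    obtain ⟨p, rfl, hne⟩ := H u ⟨hu, hy0⟩
    exact ⟨_, evalPath_mem_pathCornerSpan p, hne⟩

end NTranslation

open NTranslation in
theorem translation_conditions_iff_nondegenerate_pairing_general
    (k : Type) [Field k] (V : Type) (Arr : V → V → Type)
    (A : Type) [Ring A] [Algebra k A]
    (e : V → A) (arr : ∀ i j : V, Arr i j → A)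
    (n : ℕ) (P I : Set V) (τ : V → V)
    (hbij : Set.BijOn τ Pᶜ Iᶜ) :
    ((∀ i ∉ P, ∀ (j : V) (t : ℕ), t ≤ n + 1 →
        ∀ u : Comb k V Arr j i, IsBoundElement k V Arr A e arr u t →
          ∃ q : PathIn Arr (τ i) j, q.length + t = n + 1 ∧
            evalComb k V Arr A e arr u * evalPath V Arr A e arr q ≠ 0) ∧
     (∀ i ∉ I, ∀ (j : V) (t : ℕ), t ≤ n + 1 →
        ∀ u : Comb k V Arr i j, IsBoundElement k V Arr A e arr u t →
          ∃ i', i' ∉ P ∧ τ i' = i ∧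
            ∃ p : PathIn Arr j i', p.length + t = n + 1 ∧
              evalPath V Arr A e arr p * evalComb k V Arr A e arr u ≠ 0))
    ↔
    (∀ i ∉ P, ∀ (j : V) (t : ℕ), t ≤ n + 1 →
      ((∃ p : PathIn Arr j i, p.length = t ∧ evalPath V Arr A e arr p ≠ 0) ∨
       (∃ q : PathIn Arr (τ i) j, q.length + t = n + 1 ∧
          evalPath V Arr A e arr q ≠ 0)) →
      ((∀ x ∈ pathCornerSpan k V Arr A e arr i j t, x ≠ 0 →
          ∃ y ∈ pathCornerSpan k V Arr A e arr j (τ i) (n + 1 - t), x * y ≠ 0) ∧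
       (∀ y ∈ pathCornerSpan k V Arr A e arr j (τ i) (n + 1 - t), y ≠ 0 →
          ∃ x ∈ pathCornerSpan k V Arr A e arr i j t, x * y ≠ 0))) := by
  constructor
  · rintro ⟨h3, h4⟩ i hi j t ht -
    refine ⟨mulSeparatingLeft_pathCornerSpan_iff.2 fun u hu => ?_,
      mulSeparatingRight_pathCornerSpan_iff.2 fun u hu => ?_⟩
    · obtain ⟨q, hq, hne⟩ := h3 i hi j t ht u hu
      exact ⟨q, by omega, hne⟩
    · obtain ⟨i', hi', hτ, p, hp, hne⟩ :=
        h4 (τ i) (hbij.mapsTo hi) j (n + 1 - t) (by omega) u hu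
      obtain rfl := hbij.injOn hi' hi hτ
      exact ⟨p, by omega, hne⟩
  · intro H
    refine ⟨fun i hi j t ht u hu => ?_, fun i hi j t ht u hu => ?_⟩
    · have hsep := (H i hi j t ht (.inl hu.exists_path)).1
      obtain ⟨q, hq, hne⟩ := mulSeparatingLeft_pathCornerSpan_iff.1 hsep u hu
      exact ⟨q, by omega, hne⟩
    · obtain ⟨i', hi', rfl⟩ := hbij.surjOn hi
      obtain ⟨q, hq, hne⟩ := hu.exists_path
      have hsep := (H i' hi' j (n + 1 - t) (by omega) (.inr ⟨q, by omega, hne⟩)).2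
      rw [Nat.sub_sub_self ht] at hsep
      obtain ⟨p, hp, hne⟩ := mulSeparatingRight_pathCornerSpan_iff.1 hsep u hu
      exact ⟨i', hi', rfl, p, by omega, hne⟩

open NTranslation in
/-- **Lemma `nondegbil`.**  Let `Q = (Q₀, Q₁, ρ)` be a bound
quiver with homogeneous relations satisfying conditions (1) and (2) of the
definition of an `n`-translation quiver, realized by `Λ = k(Q)`.  Then
conditions (3) and (4) hold if and only if for each `i ∉ 𝒫` and each `j`
such that there is a bound path from `j` to `i` of length `t` or a bound path
from `τ i` to `j` of length `n+1-t`, the multiplication of `Λ` defines a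
non-degenerate bilinear form
`e_iΛ_t e_j × e_jΛ_{n+1-t} e_{τi} → e_iΛ_{n+1}e_{τi}`. -/
theorem translation_conditions_iff_nondegenerate_pairing
    (k : Type) [Field k] (V : Type) (Arr : V → V → Type)
    (A : Type) [Ring A] [Algebra k A]
    (e : V → A) (arr : ∀ i j : V, Arr i j → A)
    (ρ : ∀ i j : V, Set (Comb k V Arr i j))
    (hpres : IsBoundQuiverAlgebra k V Arr A e arr ρ)
    (n : ℕ) (P I : Set V) (τ : V → V)
    (hbij : Set.BijOn τ Pᶜ Iᶜ)
    (h1a : ∀ i ∉ P, ∃ p : PathIn Arr (τ i) i,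
      p.length = n + 1 ∧ evalPath V Arr A e arr p ≠ 0)
    (h1b : ∀ (a b : V) (p : PathIn Arr a b), evalPath V Arr A e arr p ≠ 0 →
      (∀ (c : V) (α : Arr b c), arr b c α * evalPath V Arr A e arr p = 0) →
      (∀ (c : V) (α : Arr c a), evalPath V Arr A e arr p * arr c a α = 0) →
      ∃ i, i ∉ P ∧ a = τ i ∧ b = i ∧ p.length = n + 1)
    (h2 : ∀ i ∉ P, ∀ (p q : PathIn Arr (τ i) i),
      p.length = n + 1 → q.length = n + 1 →
      ∃ c d : k, ¬ (c = 0 ∧ d = 0) ∧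
        c • evalPath V Arr A e arr p + d • evalPath V Arr A e arr q = 0) :
    ((∀ i ∉ P, ∀ (j : V) (t : ℕ), t ≤ n + 1 →
        ∀ u : Comb k V Arr j i, IsBoundElement k V Arr A e arr u t →
          ∃ q : PathIn Arr (τ i) j, q.length + t = n + 1 ∧
            evalComb k V Arr A e arr u * evalPath V Arr A e arr q ≠ 0) ∧
     (∀ i ∉ I, ∀ (j : V) (t : ℕ), t ≤ n + 1 →
        ∀ u : Comb k V Arr i j, IsBoundElement k V Arr A e arr u t →
          ∃ i', i' ∉ P ∧ τ i' = i ∧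
            ∃ p : PathIn Arr j i', p.length + t = n + 1 ∧
              evalPath V Arr A e arr p * evalComb k V Arr A e arr u ≠ 0))
    ↔
    (∀ i ∉ P, ∀ (j : V) (t : ℕ), t ≤ n + 1 →
      ((∃ p : PathIn Arr j i, p.length = t ∧ evalPath V Arr A e arr p ≠ 0) ∨
       (∃ q : PathIn Arr (τ i) j, q.length + t = n + 1 ∧
          evalPath V Arr A e arr q ≠ 0)) →
      ((∀ x ∈ pathCornerSpan k V Arr A e arr i j t, x ≠ 0 →
          ∃ y ∈ pathCornerSpan k V Arr A e arr j (τ i) (n + 1 - t), x * y ≠ 0) ∧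
       (∀ y ∈ pathCornerSpan k V Arr A e arr j (τ i) (n + 1 - t), y ≠ 0 →
          ∃ x ∈ pathCornerSpan k V Arr A e arr i j t, x * y ≠ 0))) :=
  translation_conditions_iff_nondegenerate_pairing_general k V Arr A e arr n P I τ hbij
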